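/- arXiv:2505.06273 — 6 statements merged into one kernel-verified Lean document; each statement's English description precedes it below -/
import Mathlib

section
/- In a finite discounted MDP with discount γ ∈ [0,1) and temperature α > 0, if the reward function is r(s,a) = α·log π*(a|s) + β(s) − γ·E_{s'∼P(·|s,a)}[β(s')] for a policy π* with π*(a|s) > 0 and a function β : S → ℝ, then the soft Q-function of π* under r (defined by the soft Bellman equation Q(s,a) = r(s,a) + γ·E_{s'}[E_{a'∼π*}[Q(s',a')] + α·H(π*(·|s'))], where H is Shannon entropy) equals Q(s,a) = α·log π*(a|s) + β(s) for all (s,a). -/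
open Finset

variable {S A : Type*}

/-- A policy: for each state, a probability distribution over actions. -/
def IsPolicy [Fintype A] (π : S → A → ℝ) : Prop :=
  (∀ s a, 0 ≤ π s a) ∧ ∀ s, ∑ a, π s a = 1

/-- A transition kernel: for each state-action pair, a distribution over next states. -/
def IsKernel [Fintype S] (P : S → A → S → ℝ) : Prop :=
  (∀ s a s', 0 ≤ P s a s') ∧ ∀ s a, ∑ s', P s a s' = 1

/-- Shannon entropy of a finitely supported distribution. -/
noncomputable def entH [Fintype A] (p : A → ℝ) : ℝ := -∑ a, p a * Real.log (p a)

/-- Kullback–Leibler divergence on a finite set. -/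
noncomputable def KLdiv [Fintype A] (p q : A → ℝ) : ℝ := ∑ a, p a * Real.log (p a / q a)

/-- Soft (log-sum-exp) value of a Q-function at a state. -/
noncomputable def softV [Fintype A] (α : ℝ) (Q : S → A → ℝ) (s : S) : ℝ :=
  α * Real.log (∑ a, Real.exp (Q s a / α))

/-- Q satisfies the soft Bellman equation for policy π under reward r. -/
def IsSoftQ [Fintype S] [Fintype A] (P : S → A → S → ℝ) (r : S → A → ℝ) (γ α : ℝ)
    (π : S → A → ℝ) (Q : S → A → ℝ) : Prop :=
  ∀ s a, Q s a = r s a + γ * ∑ s', P s a s' *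
    ((∑ a', π s' a' * Q s' a') + α * entH (π s'))

/-- π is the softmax (α-optimal) policy of the soft Q-function Q. -/
def IsAlphaOptimal [Fintype A] (α : ℝ) (π : S → A → ℝ) (Q : S → A → ℝ) : Prop :=
  ∀ s a, π s a = Real.exp ((Q s a - softV α Q s) / α)

/-- `EKL P π πstar n s a` = expected KL divergence `D_KL(π(·|s_{n+1}) ‖ πstar(·|s_{n+1}))`
at time `n+1` along a π-trajectory started at `(s_0, a_0) = (s, a)`. -/
noncomputable def EKL [Fintype S] [Fintype A] (P : S → A → S → ℝ)
    (π πstar : S → A → ℝ) : ℕ → S → A → ℝ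
  | 0 => fun s a => ∑ s', P s a s' * KLdiv (π s') (πstar s')
  | (n+1) => fun s a => ∑ s', P s a s' * ∑ a', π s' a' * EKL P π πstar n s' a'

/-- Sequential forward KL divergence
`D̄(π‖πstar; s,a) = Σ_{t≥1} γ^t E[D_KL(π(·|s_t)‖πstar(·|s_t))]`. -/
noncomputable def seqKL [Fintype S] [Fintype A] (P : S → A → S → ℝ)
    (π πstar : S → A → ℝ) (γ : ℝ) (s : S) (a : A) : ℝ :=
  ∑' n : ℕ, γ ^ (n + 1) * EKL P π πstar n s a

/-- `stateDist P π n s a x` = probability of being at state `x` at time `n+1` along a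
π-trajectory started at `(s_0, a_0) = (s, a)`. -/
noncomputable def stateDist [Fintype S] [Fintype A] (P : S → A → S → ℝ)
    (π : S → A → ℝ) : ℕ → S → A → S → ℝ
  | 0 => fun s a x => P s a x
  | (n+1) => fun s a x => ∑ s', stateDist P π n s a s' * ∑ a', π s' a' * P s' a' x

theorem stmt1 [Fintype S] [Fintype A] [Nonempty A]
    (P : S → A → S → ℝ) (hP : IsKernel P)
    (γ α : ℝ) (hγ0 : 0 ≤ γ) (hγ1 : γ < 1) (hα : 0 < α)
    (πstar : S → A → ℝ) (hπ : IsPolicy πstar) (hpos : ∀ s a, 0 < πstar s a)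
    (β : S → ℝ) (r : S → A → ℝ)
    (hr : ∀ s a, r s a = α * Real.log (πstar s a) + β s - γ * ∑ s', P s a s' * β s')
    (Q : S → A → ℝ) (hQ : IsSoftQ P r γ α πstar Q) :
    ∀ s a, Q s a = α * Real.log (πstar s a) + β s := by
  set D : S → A → ℝ := fun s a => Q s a - (α * Real.log (πstar s a) + β s) with hDdef
  have hD : ∀ s a, D s a = γ * ∑ s', P s a s' * ∑ a', πstar s' a' * D s' a' := by
    intro s a
    have hinner : ∀ s' : S, (∑ a', πstar s' a' * Q s' a') + α * entH (πstar s')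
        = (∑ a', πstar s' a' * D s' a') + β s' := by
      intro s'
      have h1 : ∀ a', πstar s' a' * Q s' a'
          = πstar s' a' * D s' a' + α * (πstar s' a' * Real.log (πstar s' a'))
            + πstar s' a' * β s' := by
        intro a'; simp only [hDdef]; ring
      rw [Finset.sum_congr rfl fun a' _ => h1 a']
      rw [Finset.sum_add_distrib, Finset.sum_add_distrib, ← Finset.mul_sum, ← Finset.sum_mul,
        hπ.2 s', one_mul, entH]
      ring
    have hq := hQ s a
    rw [Finset.sum_congr rfl fun s' _ => by rw [hinner s']] at hq
    have hsplit : ∑ s', P s a s' * ((∑ a', πstar s' a' * D s' a') + β s')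
        = (∑ s', P s a s' * ∑ a', πstar s' a' * D s' a') + ∑ s', P s a s' * β s' := by
      rw [← Finset.sum_add_distrib]; exact Finset.sum_congr rfl fun s' _ => by ring
    rw [hsplit] at hq
    simp only [hDdef, hq, hr s a]; ring
  intro s a
  haveI : Nonempty S := ⟨s⟩
  obtain ⟨p, -, hp⟩ := Finset.exists_max_image (Finset.univ : Finset (S × A))
    (fun p : S × A => |D p.1 p.2|) ⟨(s, a), Finset.mem_univ _⟩
  set M := |D p.1 p.2| with hM
  have hMnn : 0 ≤ M := abs_nonneg _
  have hbound : ∀ s' a', |D s' a'| ≤ M := fun s' a' => hp (s', a') (Finset.mem_univ _)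
  have hstep : M ≤ γ * M := by
    calc M = |γ * ∑ s', P p.1 p.2 s' * ∑ a', πstar s' a' * D s' a'| := by rw [hM, ← hD]
    _ = γ * |∑ s', P p.1 p.2 s' * ∑ a', πstar s' a' * D s' a'| := by
        rw [abs_mul, abs_of_nonneg hγ0]
    _ ≤ γ * ∑ s', P p.1 p.2 s' * ∑ a', πstar s' a' * M := by
        apply mul_le_mul_of_nonneg_left _ hγ0
        calc |∑ s', P p.1 p.2 s' * ∑ a', πstar s' a' * D s' a'|
            ≤ ∑ s', |P p.1 p.2 s' * ∑ a', πstar s' a' * D s' a'| :=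
              Finset.abs_sum_le_sum_abs _ _
          _ ≤ ∑ s', P p.1 p.2 s' * ∑ a', πstar s' a' * M := by
              apply Finset.sum_le_sum
              intro s' _
              rw [abs_mul, abs_of_nonneg (hP.1 _ _ _)]
              apply mul_le_mul_of_nonneg_left _ (hP.1 _ _ _)
              calc |∑ a', πstar s' a' * D s' a'| ≤ ∑ a', |πstar s' a' * D s' a'| :=
                    Finset.abs_sum_le_sum_abs _ _
                _ ≤ ∑ a', πstar s' a' * M := by
                    apply Finset.sum_le_sum
                    intro a' _
                    rw [abs_mul, abs_of_nonneg (hπ.1 _ _)]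
                    exact mul_le_mul_of_nonneg_left (hbound _ _) (hπ.1 _ _)
    _ = γ * M := by
        congr 1
        rw [show (∑ s', P p.1 p.2 s' * ∑ a', πstar s' a' * M) = ∑ s', P p.1 p.2 s' * M from
          Finset.sum_congr rfl fun s' _ => by rw [← Finset.sum_mul, hπ.2, one_mul]]
        rw [← Finset.sum_mul, hP.2, one_mul]
  have hM0 : M = 0 := by nlinarith
  have hz : D s a = 0 := abs_nonpos_iff.mp (by rw [← hM0]; exact hbound s a)
  have := sub_eq_zero.mp hz
  simpa using this
end

section
/- In a finite MDP with γ ∈ [0,1), a policy π* is α-optimal (i.e., π*(a|s) = exp((Q^{π*}(s,a) − V^{π*}(s))/α) where V^{π*}(s) = α·log Σ_a exp(Q^{π*}(s,a)/α)) under reward r if and only if there exists β : S → ℝ such that r(s,a) = α·log π*(a|s) + β(s) − γ·E_{s'∼P(·|s,a)}[β(s')] for all (s,a). Moreover the correspondence between such rewards and functions β is a bijection. -/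
open Finset

variable {S A : Type*}

theorem stmt2 [Fintype S] [Fintype A] [Nonempty A]
    (P : S → A → S → ℝ) (hP : IsKernel P)
    (γ α : ℝ) (hγ0 : 0 ≤ γ) (hγ1 : γ < 1) (hα : 0 < α)
    (πstar : S → A → ℝ) (hπ : IsPolicy πstar) (hpos : ∀ s a, 0 < πstar s a) :
    (∀ r : S → A → ℝ,
      ((∃ Q : S → A → ℝ,
          (∀ s a, Q s a = r s a + γ * ∑ s', P s a s' * softV α Q s') ∧
          IsAlphaOptimal α πstar Q) ↔
        ∃ β : S → ℝ, ∀ s a,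
          r s a = α * Real.log (πstar s a) + β s - γ * ∑ s', P s a s' * β s')) ∧
    Function.Injective (fun β : S → ℝ => fun s a =>
      α * Real.log (πstar s a) + β s - γ * ∑ s', P s a s' * β s') := by
  have hα' : α ≠ 0 := ne_of_gt hα
  constructor
  · intro r
    constructor
    · rintro ⟨Q, hQ, hopt⟩
      refine ⟨softV α Q, fun s a => ?_⟩
      have hlog : α * Real.log (πstar s a) = Q s a - softV α Q s := by
        rw [hopt s a, Real.log_exp]
        field_simp
      rw [hlog]
      linarith [hQ s a]
    · rintro ⟨β, hβ⟩
      have hV : ∀ s, softV α (fun s a => α * Real.log (πstar s a) + β s) s = β s := by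
        intro s
        unfold softV
        have he : ∀ a, Real.exp ((α * Real.log (πstar s a) + β s) / α)
            = πstar s a * Real.exp (β s / α) := by
          intro a
          rw [add_div, mul_div_cancel_left₀ _ hα', Real.exp_add,
            Real.exp_log (hpos s a)]
        rw [Finset.sum_congr rfl fun a _ => he a, ← Finset.sum_mul, hπ.2 s,
          one_mul, Real.log_exp]
        field_simp
      refine ⟨fun s a => α * Real.log (πstar s a) + β s, fun s a => ?_, fun s a => ?_⟩
      · have : (∑ s', P s a s' * softV α (fun s a => α * Real.log (πstar s a) + β s) s')
            = ∑ s', P s a s' * β s' := by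
          exact Finset.sum_congr rfl fun s' _ => by rw [hV s']
        rw [this, hβ s a]
        ring
      · rw [hV s]
        simp only
        rw [add_sub_cancel_right, mul_div_cancel_left₀ _ hα', Real.exp_log (hpos s a)]
  · intro β1 β2 h
    have hkey : ∀ s a, β1 s - β2 s = γ * ∑ s', P s a s' * (β1 s' - β2 s') := by
      intro s a
      have h' := congrFun (congrFun h s) a
      simp only at h'
      have : ∑ s', P s a s' * (β1 s' - β2 s')
          = (∑ s', P s a s' * β1 s') - ∑ s', P s a s' * β2 s' := by
        rw [← Finset.sum_sub_distrib]
        exact Finset.sum_congr rfl fun s' _ => by ring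
      rw [this]
      linarith [h']
    cases isEmpty_or_nonempty S with
    | inl hS => funext s; exact absurd (Nonempty.intro s) (not_nonempty_iff.mpr hS)
    | inr hS =>
      obtain ⟨s₀, _, hmax⟩ := Finset.exists_max_image Finset.univ
        (fun s => |β1 s - β2 s|) ⟨Classical.arbitrary S, Finset.mem_univ _⟩
      have hzero : |β1 s₀ - β2 s₀| = 0 := by
        have a := Classical.arbitrary A
        have h1 : |β1 s₀ - β2 s₀| ≤ γ * |β1 s₀ - β2 s₀| := by
          calc |β1 s₀ - β2 s₀| = γ * |∑ s', P s₀ a s' * (β1 s' - β2 s')| := by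
                rw [hkey s₀ a, abs_mul, abs_of_nonneg hγ0]
            _ ≤ γ * ∑ s', P s₀ a s' * |β1 s₀ - β2 s₀| := by
                apply mul_le_mul_of_nonneg_left _ hγ0
                calc |∑ s', P s₀ a s' * (β1 s' - β2 s')|
                    ≤ ∑ s', |P s₀ a s' * (β1 s' - β2 s')| := Finset.abs_sum_le_sum_abs _ _
                  _ ≤ ∑ s', P s₀ a s' * |β1 s₀ - β2 s₀| := by
                      apply Finset.sum_le_sum
                      intro s' _
                      rw [abs_mul, abs_of_nonneg (hP.1 s₀ a s')]
                      exact mul_le_mul_of_nonneg_left (hmax s' (Finset.mem_univ _))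
                        (hP.1 s₀ a s')
            _ = γ * |β1 s₀ - β2 s₀| := by
                rw [← Finset.sum_mul, hP.2 s₀ a, one_mul]
        nlinarith [abs_nonneg (β1 s₀ - β2 s₀)]
      funext s
      have := hmax s (Finset.mem_univ _)
      rw [hzero] at this
      have : β1 s - β2 s = 0 := abs_eq_zero.mp (le_antisymm this (abs_nonneg _))
      linarith
end

section
/- In a finite discounted MDP with reward r, for any policy π the soft Q-function Q^π (the unique solution of the soft Bellman equation for π) is the unique fixed point of the operator T^π_* defined by (T^π_* Q)(s,a) = Q^{π*}(s,a) − γ·E_{s'∼P(·|s,a)}[α(H^{π*}(s') − H^π(s')) + E_{a'∼π*(·|s')}[Q^{π*}(s',a')] − E_{a'∼π(·|s')}[Q(s',a')]], where π* is any α-optimal policy for r, Q^{π*} its soft Q-function, and H^π(s) = −Σ_a π(a|s) log π(a|s). -/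
open Finset

variable {S A : Type*}

theorem stmt5 [Fintype S] [Fintype A] [Nonempty A]
    (P : S → A → S → ℝ) (hP : IsKernel P)
    (r : S → A → ℝ) (γ α : ℝ) (hγ0 : 0 ≤ γ) (hγ1 : γ < 1) (hα : 0 < α)
    (πstar π : S → A → ℝ) (hπstar : IsPolicy πstar) (hπ : IsPolicy π)
    (Qstar : S → A → ℝ) (hQstar : IsSoftQ P r γ α πstar Qstar)
    (hopt : IsAlphaOptimal α πstar Qstar)
    (Qπ : S → A → ℝ) (hQπ : IsSoftQ P r γ α π Qπ)
    (T : (S → A → ℝ) → S → A → ℝ)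
    (hT : ∀ Q s a, T Q s a = Qstar s a - γ * ∑ s', P s a s' *
      (α * (entH (πstar s') - entH (π s')) +
        (∑ a', πstar s' a' * Qstar s' a') - ∑ a', π s' a' * Q s' a')) :
    T Qπ = Qπ ∧ ∀ Q : S → A → ℝ, T Q = Q → Q = Qπ := by
  have key : ∀ Q : S → A → ℝ, ∀ s a, T Q s a = r s a + γ * ∑ s', P s a s' *
      ((∑ a', π s' a' * Q s' a') + α * entH (π s')) := by
    intro Q s a
    rw [hT, hQstar s a]
    simp only [mul_sub, mul_add, sub_mul, Finset.sum_sub_distrib, Finset.sum_add_distrib]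
    ring
  have main : ∀ Q : S → A → ℝ, (∀ s a, Q s a = T Q s a) → Q = Qπ := by
    intro Q hQ
    have hD : ∀ s a, Q s a - Qπ s a =
        γ * ∑ s', P s a s' * ∑ a', π s' a' * (Q s' a' - Qπ s' a') := by
      intro s a
      rw [hQ s a, key Q s a, hQπ s a]
      simp only [mul_sub, mul_add, Finset.sum_sub_distrib, Finset.sum_add_distrib]
      ring
    funext s a
    haveI : Nonempty S := ⟨s⟩
    set M := Finset.univ.sup' Finset.univ_nonempty
      (fun p : S × A => |Q p.1 p.2 - Qπ p.1 p.2|) with hMdef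
    have hM : ∀ s a, |Q s a - Qπ s a| ≤ M := fun s a =>
      Finset.le_sup' (fun p : S × A => |Q p.1 p.2 - Qπ p.1 p.2|) (Finset.mem_univ (s, a))
    have hM0 : 0 ≤ M := le_trans (abs_nonneg _) (hM s a)
    have hbound : ∀ s a, |Q s a - Qπ s a| ≤ γ * M := by
      intro s a
      rw [hD s a, abs_mul, abs_of_nonneg hγ0]
      have h1 : |∑ s', P s a s' * ∑ a', π s' a' * (Q s' a' - Qπ s' a')| ≤ M := by
        calc |∑ s', P s a s' * ∑ a', π s' a' * (Q s' a' - Qπ s' a')|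
            ≤ ∑ s', |P s a s' * ∑ a', π s' a' * (Q s' a' - Qπ s' a')| :=
              Finset.abs_sum_le_sum_abs _ _
          _ ≤ ∑ s', P s a s' * M := by
              apply Finset.sum_le_sum
              intro s' _
              rw [abs_mul, abs_of_nonneg (hP.1 s a s')]
              refine mul_le_mul_of_nonneg_left ?_ (hP.1 s a s')
              calc |∑ a', π s' a' * (Q s' a' - Qπ s' a')|
                  ≤ ∑ a', |π s' a' * (Q s' a' - Qπ s' a')| :=
                    Finset.abs_sum_le_sum_abs _ _
                _ ≤ ∑ a', π s' a' * M := by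
                    apply Finset.sum_le_sum
                    intro a' _
                    rw [abs_mul, abs_of_nonneg (hπ.1 s' a')]
                    exact mul_le_mul_of_nonneg_left (hM s' a') (hπ.1 s' a')
                _ = M := by rw [← Finset.sum_mul, hπ.2 s', one_mul]
          _ = M := by rw [← Finset.sum_mul, hP.2 s a, one_mul]
      exact mul_le_mul_of_nonneg_left h1 hγ0
    have hMle : M ≤ γ * M := by
      apply Finset.sup'_le
      intro p _
      exact hbound p.1 p.2
    have hM00 : M ≤ 0 := by nlinarith
    have := le_antisymm (le_trans (hM s a) hM00) (abs_nonneg _)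
    have := abs_eq_zero.mp this
    linarith
  constructor
  · have := main Qπ (fun s a => ((key Qπ s a).trans (hQπ s a).symm).symm)
    exact funext fun s => funext fun a => ((key Qπ s a).trans (hQπ s a).symm)
  · intro Q hQ
    exact main Q (fun s a => by rw [hQ])
end

section
/- (Policy Deviation Theorem, finite MDP version) Let π* be α-optimal under reward r in a finite discounted MDP with γ ∈ [0,1), and let π be any policy with π*(a|s) > 0 wherever π(a|s) > 0. Then for all (s,a): Q^{π*}(s,a) − Q^{π}(s,a) = α·Σ_{t≥1} γ^t · E_{(s_t) ∼ trajectory of π starting at (s_0,a_0)=(s,a)}[ D_KL(π(·|s_t) ‖ π*(·|s_t)) ], i.e., the gap between the optimal soft Q-function and the soft Q-function of π equals α times the discounted sum of expected forward KL divergences along π's trajectories. -/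
open Finset

variable {S A : Type*}

/-
The Bellman equations of `π` and `π*` subtract to a linear fixed-point equation for the gap
`D = Q^{π*} - Q^π`. Because `π*` is the softmax of `Q^{π*}`, the Gibbs variational identity
`E_p[Q^{π*}] + α H(p) = V^{π*} - α D_KL(p ‖ π*)` turns the entropy terms into a KL penalty, so
`D = γ T D + α γ E₁`, where `T` is the one-step transition operator of `π` on functions of `(s, a)`
and `E₁` is the expected KL divergence at time 1. Since `T` is non-expansive in the sup norm and
`γ < 1`, unrolling this equation gives the Neumann series `D = α Σ_n γ^(n+1) T^n E₁`, and `T^n E₁`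
is the expected KL divergence at time `n + 1`.
-/

open Filter Topology

theorem abs_sum_mul_le_of_abs_le {ι : Type*} [Fintype ι] {w g : ι → ℝ} (hw : ∀ i, 0 ≤ w i)
    (hw1 : ∑ i, w i = 1) {M : ℝ} (hg : ∀ i, |g i| ≤ M) : |∑ i, w i * g i| ≤ M :=
  calc |∑ i, w i * g i| ≤ ∑ i, |w i * g i| := abs_sum_le_sum_abs _ _
    _ = ∑ i, w i * |g i| := by simp only [abs_mul, abs_of_nonneg (hw _)]
    _ ≤ ∑ i, w i * M := sum_le_sum fun i _ => mul_le_mul_of_nonneg_left (hg i) (hw i)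
    _ = M := by rw [← sum_mul, hw1, one_mul]

theorem hasSum_pow_smul_pow_apply_of_eq_smul_add {𝕜 E : Type*} [NormedField 𝕜]
    [SeminormedAddCommGroup E] [NormedSpace 𝕜 E] {T : E →ₗ[𝕜] E} (hT : ∀ x, ‖T x‖ ≤ ‖x‖)
    {c : 𝕜} (hc : ‖c‖ < 1) {x y : E} (hx : x = c • T x + y) :
    HasSum (fun n => c ^ n • (T ^ n) y) x := by
  have hTpow : ∀ n z, ‖(T ^ n) z‖ ≤ ‖z‖ := by
    intro n
    induction n with
    | zero => simp
    | succ n ih => intro z; rw [pow_succ', Module.End.mul_apply]; exact (hT _).trans (ih z)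
  have hpartial : ∀ N, ∑ n ∈ range N, c ^ n • (T ^ n) y = x - c ^ N • (T ^ N) x := by
    intro N
    induction N with
    | zero => simp
    | succ N ih =>
      have hunroll : c ^ N • (T ^ N) x = c ^ (N + 1) • (T ^ (N + 1)) x + c ^ N • (T ^ N) y := by
        conv_lhs => rw [hx]
        rw [map_add, map_smul, ← Module.End.mul_apply, ← pow_succ, smul_add, smul_smul, ← pow_succ]
      rw [sum_range_succ, ih, hunroll]
      abel
  have hbound : ∀ n z, ‖c ^ n • (T ^ n) z‖ ≤ ‖c‖ ^ n * ‖z‖ := fun n z => by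
    rw [norm_smul, norm_pow]
    exact mul_le_mul_of_nonneg_left (hTpow n z) (by positivity)
  have hgeom := tendsto_pow_atTop_nhds_zero_of_lt_one (norm_nonneg c) hc
  rw [hasSum_iff_tendsto_nat_of_summable_norm
    (Summable.of_nonneg_of_le (fun _ => norm_nonneg _) (fun n => hbound n y)
      ((summable_geometric_of_lt_one (norm_nonneg c) hc).mul_right _))]
  simp only [hpartial]
  have htail : Tendsto (fun N => c ^ N • (T ^ N) x) atTop (𝓝 0) :=
    squeeze_zero_norm (fun N => hbound N x) (by simpa using hgeom.mul_const ‖x‖)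
  simpa using tendsto_const_nhds.sub htail

section Softmax

variable [Fintype A] {α : ℝ} {π Q : S → A → ℝ}

theorem KLdiv_self {q : A → ℝ} (hq : ∀ a, 0 < q a) : KLdiv q q = 0 :=
  sum_eq_zero fun a _ => by rw [div_self (hq a).ne', Real.log_one, mul_zero]

theorem IsAlphaOptimal.pos (hopt : IsAlphaOptimal α π Q) (s : S) (a : A) : 0 < π s a := by
  rw [hopt s a]; exact Real.exp_pos _

theorem IsAlphaOptimal.sum_mul_add_entH (hα : α ≠ 0) (hopt : IsAlphaOptimal α π Q) (s : S)
    {p : A → ℝ} (hp0 : ∀ a, 0 ≤ p a) (hp1 : ∑ a, p a = 1) :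
    ∑ a, p a * Q s a + α * entH p = softV α Q s - α * KLdiv p (π s) := by
  have hKL : KLdiv p (π s) =
      ∑ a, (p a * Real.log (p a) - p a * Q s a / α + p a * softV α Q s / α) := by
    refine sum_congr rfl fun a _ => ?_
    rcases (hp0 a).eq_or_lt with h | h
    · simp [← h]
    · rw [hopt s a, Real.log_div h.ne' (Real.exp_ne_zero _), Real.log_exp]
      field_simp
      ring
  rw [hKL, sum_add_distrib, sum_sub_distrib, ← sum_div, ← sum_div, ← sum_mul, hp1, entH]
  field_simp
  ring

theorem IsAlphaOptimal.softBackup_sub (hα : α ≠ 0) {πstar Qstar : S → A → ℝ}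
    (hopt : IsAlphaOptimal α πstar Qstar) (hπstar : IsPolicy πstar) (hπ : IsPolicy π)
    (Qπ : S → A → ℝ) (s : S) :
    (∑ a, πstar s a * Qstar s a + α * entH (πstar s)) - (∑ a, π s a * Qπ s a + α * entH (π s)) =
      ∑ a, π s a * (Qstar s a - Qπ s a) + α * KLdiv (π s) (πstar s) := by
  have hstar := hopt.sum_mul_add_entH hα s (hπstar.1 s) (hπstar.2 s)
  rw [KLdiv_self (hopt.pos s), mul_zero, sub_zero] at hstar
  have hπQstar := hopt.sum_mul_add_entH hα s (hπ.1 s) (hπ.2 s)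
  simp only [mul_sub, sum_sub_distrib]
  linarith

end Softmax

section Transition

variable [Fintype S] [Fintype A]

noncomputable def policyTransition (P : S → A → S → ℝ) (π : S → A → ℝ) :
    (S → A → ℝ) →ₗ[ℝ] (S → A → ℝ) where
  toFun f s a := ∑ s', P s a s' * ∑ a', π s' a' * f s' a'
  map_add' f g := by
    ext s a
    simp only [Pi.add_apply, mul_add, sum_add_distrib]
  map_smul' c f := by
    ext s a
    simp only [Pi.smul_apply, smul_eq_mul, RingHom.id_apply, mul_sum]
    exact sum_congr rfl fun _ _ => sum_congr rfl fun _ _ => by ring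

theorem policyTransition_apply (P : S → A → S → ℝ) (π : S → A → ℝ) (f : S → A → ℝ) (s : S)
    (a : A) : policyTransition P π f s a = ∑ s', P s a s' * ∑ a', π s' a' * f s' a' :=
  rfl

theorem norm_policyTransition_apply_le {P : S → A → S → ℝ} {π : S → A → ℝ} (hP : IsKernel P)
    (hπ : IsPolicy π) (f : S → A → ℝ) : ‖policyTransition P π f‖ ≤ ‖f‖ := by
  have hf : ∀ s a, |f s a| ≤ ‖f‖ := fun s a =>
    ((norm_le_pi_norm (f s) a).trans (norm_le_pi_norm f s) :)
  refine (pi_norm_le_iff_of_nonneg (norm_nonneg f)).2 fun s =>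
    (pi_norm_le_iff_of_nonneg (norm_nonneg f)).2 fun a => ?_
  exact abs_sum_mul_le_of_abs_le (hP.1 s a) (hP.2 s a) fun s' =>
    abs_sum_mul_le_of_abs_le (hπ.1 s') (hπ.2 s') (hf s')

theorem EKL_eq_pow_apply (P : S → A → S → ℝ) (π πstar : S → A → ℝ) (n : ℕ) :
    EKL P π πstar n = (policyTransition P π ^ n) (EKL P π πstar 0) := by
  induction n with
  | zero => rfl
  | succ n ih =>
    rw [pow_succ', Module.End.mul_apply, ← ih]
    rfl

theorem IsSoftQ.sub_eq_smul_policyTransition_add {P : S → A → S → ℝ} {r : S → A → ℝ}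
    {γ α : ℝ} {πstar π Qstar Qπ : S → A → ℝ} (hα : α ≠ 0) (hπstar : IsPolicy πstar)
    (hπ : IsPolicy π) (hQstar : IsSoftQ P r γ α πstar Qstar) (hopt : IsAlphaOptimal α πstar Qstar)
    (hQπ : IsSoftQ P r γ α π Qπ) :
    Qstar - Qπ = γ • policyTransition P π (Qstar - Qπ) + (α * γ) • EKL P π πstar 0 := by
  ext s a
  simp only [Pi.add_apply, Pi.sub_apply, Pi.smul_apply, smul_eq_mul, policyTransition_apply, EKL]
  rw [hQstar s a, hQπ s a, add_sub_add_left_eq_sub, ← mul_sub, ← sum_sub_distrib]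
  simp_rw [← mul_sub, hopt.softBackup_sub hα hπstar hπ Qπ]
  simp only [mul_add, sum_add_distrib, mul_left_comm _ α, ← mul_sum]
  ring

end Transition

theorem stmt6_general [Fintype S] [Fintype A]
    (P : S → A → S → ℝ) (hP : IsKernel P)
    (r : S → A → ℝ) (γ α : ℝ) (hγ0 : 0 ≤ γ) (hγ1 : γ < 1) (hα : 0 < α)
    (πstar π : S → A → ℝ) (hπstar : IsPolicy πstar) (hπ : IsPolicy π)
    (Qstar : S → A → ℝ) (hQstar : IsSoftQ P r γ α πstar Qstar)
    (hopt : IsAlphaOptimal α πstar Qstar)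
    (Qπ : S → A → ℝ) (hQπ : IsSoftQ P r γ α π Qπ) :
    ∀ s a, Qstar s a - Qπ s a = α * seqKL P π πstar γ s a := by
  have hsum : HasSum (fun n => γ ^ n • (policyTransition P π ^ n) ((α * γ) • EKL P π πstar 0))
      (Qstar - Qπ) :=
    hasSum_pow_smul_pow_apply_of_eq_smul_add (norm_policyTransition_apply_le hP hπ)
      (by rwa [Real.norm_eq_abs, abs_of_nonneg hγ0])
      (hQstar.sub_eq_smul_policyTransition_add hα.ne' hπstar hπ hopt hQπ)
  intro s a
  have hsa := Pi.hasSum.1 (Pi.hasSum.1 hsum s) a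
  rw [seqKL, ← tsum_mul_left]
  refine hsa.tsum_eq.symm.trans (tsum_congr fun n => ?_)
  simp only [map_smul, ← EKL_eq_pow_apply, Pi.smul_apply, smul_eq_mul]
  ring

theorem stmt6 [Fintype S] [Fintype A] [Nonempty A]
    (P : S → A → S → ℝ) (hP : IsKernel P)
    (r : S → A → ℝ) (γ α : ℝ) (hγ0 : 0 ≤ γ) (hγ1 : γ < 1) (hα : 0 < α)
    (πstar π : S → A → ℝ) (hπstar : IsPolicy πstar) (hπ : IsPolicy π)
    (hsupp : ∀ s a, 0 < π s a → 0 < πstar s a)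
    (Qstar : S → A → ℝ) (hQstar : IsSoftQ P r γ α πstar Qstar)
    (hopt : IsAlphaOptimal α πstar Qstar)
    (Qπ : S → A → ℝ) (hQπ : IsSoftQ P r γ α π Qπ) :
    ∀ s a, Qstar s a - Qπ s a = α * seqKL P π πstar γ s a :=
  stmt6_general P hP r γ α hγ0 hγ1 hα πstar π hπstar hπ Qstar hQstar hopt Qπ hQπ
end

section
/- In a finite discounted MDP with α-optimal policy π*, for any two rewards r₁, r₂ in the (α,π*)-equivalence class (with associated state functions β₁, β₂), and any policy π, the corresponding soft Q-functions satisfy Q₁^π(s,a) − Q₂^π(s,a) = β₁(s) − β₂(s) for all (s,a); hence the regret V^{π*}(s) − Q^π(s,a) is identical under r₁ and r₂. -/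
open Finset

variable {S A : Type*}

lemma avg_abs_le {ι : Type*} [Fintype ι] (w g : ι → ℝ) (hw : ∀ i, 0 ≤ w i)
    (hw1 : ∑ i, w i = 1) (M : ℝ) (hg : ∀ i, |g i| ≤ M) : |∑ i, w i * g i| ≤ M := by
  calc |∑ i, w i * g i| ≤ ∑ i, |w i * g i| := Finset.abs_sum_le_sum_abs _ _
    _ = ∑ i, w i * |g i| := by
        refine Finset.sum_congr rfl fun i _ => ?_
        rw [abs_mul, abs_of_nonneg (hw i)]
    _ ≤ ∑ i, w i * M :=
        Finset.sum_le_sum fun i _ => mul_le_mul_of_nonneg_left (hg i) (hw i)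
    _ = M := by rw [← Finset.sum_mul, hw1, one_mul]

lemma qdiff_key [Fintype S] [Fintype A]
    (P : S → A → S → ℝ) (hP : IsKernel P)
    (γ α : ℝ) (hγ0 : 0 ≤ γ) (hγ1 : γ < 1)
    (πstar : S → A → ℝ)
    (π : S → A → ℝ) (hπ : IsPolicy π)
    (β₁ β₂ : S → ℝ) (r₁ r₂ : S → A → ℝ)
    (hr₁ : ∀ s a, r₁ s a = α * Real.log (πstar s a) + β₁ s - γ * ∑ s', P s a s' * β₁ s')
    (hr₂ : ∀ s a, r₂ s a = α * Real.log (πstar s a) + β₂ s - γ * ∑ s', P s a s' * β₂ s')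
    (Q₁ Q₂ : S → A → ℝ)
    (hQ₁ : IsSoftQ P r₁ γ α π Q₁) (hQ₂ : IsSoftQ P r₂ γ α π Q₂) :
    ∀ s a, Q₁ s a - Q₂ s a = β₁ s - β₂ s := by
  set f : S × A → ℝ := fun p => Q₁ p.1 p.2 - Q₂ p.1 p.2 - (β₁ p.1 - β₂ p.1) with hf
  have e : ∀ s', ∑ a', π s' a' * f (s', a')
      = (∑ a', π s' a' * Q₁ s' a') - (∑ a', π s' a' * Q₂ s' a') - (β₁ s' - β₂ s') := by
    intro s'
    have : ∑ a', π s' a' * f (s', a')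
        = (∑ a', π s' a' * Q₁ s' a') - (∑ a', π s' a' * Q₂ s' a')
          - (∑ a', π s' a') * (β₁ s' - β₂ s') := by
      rw [Finset.sum_mul, ← Finset.sum_sub_distrib, ← Finset.sum_sub_distrib]
      refine Finset.sum_congr rfl fun a' _ => ?_
      simp only [hf]; ring
    rw [this, hπ.2 s', one_mul]
  have hrec : ∀ s a, f (s, a) = γ * ∑ s', P s a s' * ∑ a', π s' a' * f (s', a') := by
    intro s a
    have key : ∑ s', P s a s' * ∑ a', π s' a' * f (s', a')
        = (∑ s', P s a s' * ((∑ a', π s' a' * Q₁ s' a') + α * entH (π s')))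
          - (∑ s', P s a s' * ((∑ a', π s' a' * Q₂ s' a') + α * entH (π s')))
          - ((∑ s', P s a s' * β₁ s') - (∑ s', P s a s' * β₂ s')) := by
      rw [← Finset.sum_sub_distrib, ← Finset.sum_sub_distrib, ← Finset.sum_sub_distrib]
      refine Finset.sum_congr rfl fun s' _ => ?_
      rw [e s']; ring
    have h1 := hQ₁ s a
    have h2 := hQ₂ s a
    rw [hr₁ s a] at h1
    rw [hr₂ s a] at h2
    simp only [hf]
    rw [key, h1, h2]; ring
  intro s a
  obtain ⟨p, -, hp⟩ := Finset.exists_max_image (Finset.univ : Finset (S × A))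
    (fun q => |f q|) ⟨(s, a), Finset.mem_univ _⟩
  set M := |f p| with hM
  have hbound : ∀ q : S × A, |f q| ≤ M := fun q => hp q (Finset.mem_univ _)
  have hMγ : M ≤ γ * M := by
    have : |f p| ≤ γ * M := by
      rw [hrec p.1 p.2, abs_mul, abs_of_nonneg hγ0]
      refine mul_le_mul_of_nonneg_left ?_ hγ0
      refine avg_abs_le _ _ (fun s' => hP.1 p.1 p.2 s') (hP.2 p.1 p.2) M fun s' => ?_
      exact avg_abs_le _ _ (fun a' => hπ.1 s' a') (hπ.2 s') M fun a' => hbound (s', a')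
    exact this
  have hM0 : 0 ≤ M := abs_nonneg _
  have hMz : M ≤ 0 := by nlinarith
  have : |f (s, a)| ≤ 0 := le_trans (hbound (s, a)) hMz
  have hz : f (s, a) = 0 := abs_eq_zero.mp (le_antisymm this (abs_nonneg _))
  have : Q₁ s a - Q₂ s a - (β₁ s - β₂ s) = 0 := hz
  linarith

lemma softV_add {S A : Type*} [Fintype A] [Nonempty A] {α : ℝ} (hα : 0 < α)
    (Q₁ Q₂ : S → A → ℝ) (c : ℝ) (s : S) (h : ∀ a, Q₁ s a = Q₂ s a + c) :
    softV α Q₁ s = softV α Q₂ s + c := by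
  unfold softV
  have h1 : ∑ a, Real.exp (Q₁ s a / α) = Real.exp (c / α) * ∑ a, Real.exp (Q₂ s a / α) := by
    rw [Finset.mul_sum]
    refine Finset.sum_congr rfl fun a _ => ?_
    rw [h a, add_div, Real.exp_add]; ring
  have hpos : 0 < ∑ a, Real.exp (Q₂ s a / α) :=
    Finset.sum_pos (fun a _ => Real.exp_pos _) Finset.univ_nonempty
  rw [h1, Real.log_mul (Real.exp_ne_zero _) (ne_of_gt hpos), Real.log_exp]
  field_simp
  ring

theorem stmt9 [Fintype S] [Fintype A] [Nonempty A]
    (P : S → A → S → ℝ) (hP : IsKernel P)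
    (γ α : ℝ) (hγ0 : 0 ≤ γ) (hγ1 : γ < 1) (hα : 0 < α)
    (πstar : S → A → ℝ) (hπstar : IsPolicy πstar) (hpos : ∀ s a, 0 < πstar s a)
    (π : S → A → ℝ) (hπ : IsPolicy π)
    (β₁ β₂ : S → ℝ) (r₁ r₂ : S → A → ℝ)
    (hr₁ : ∀ s a, r₁ s a = α * Real.log (πstar s a) + β₁ s - γ * ∑ s', P s a s' * β₁ s')
    (hr₂ : ∀ s a, r₂ s a = α * Real.log (πstar s a) + β₂ s - γ * ∑ s', P s a s' * β₂ s')
    (Qstar₁ Qstar₂ : S → A → ℝ)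
    (hQstar₁ : IsSoftQ P r₁ γ α πstar Qstar₁) (hQstar₂ : IsSoftQ P r₂ γ α πstar Qstar₂)
    (Q₁ Q₂ : S → A → ℝ)
    (hQ₁ : IsSoftQ P r₁ γ α π Q₁) (hQ₂ : IsSoftQ P r₂ γ α π Q₂) :
    (∀ s a, Q₁ s a - Q₂ s a = β₁ s - β₂ s) ∧
    ∀ s a, softV α Qstar₁ s - Q₁ s a = softV α Qstar₂ s - Q₂ s a := by
  have hQ := qdiff_key P hP γ α hγ0 hγ1 πstar π hπ β₁ β₂ r₁ r₂ hr₁ hr₂ Q₁ Q₂ hQ₁ hQ₂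
  have hQs := qdiff_key P hP γ α hγ0 hγ1 πstar πstar hπstar β₁ β₂ r₁ r₂ hr₁ hr₂
    Qstar₁ Qstar₂ hQstar₁ hQstar₂
  refine ⟨hQ, fun s a => ?_⟩
  have hV : softV α Qstar₁ s = softV α Qstar₂ s + (β₁ s - β₂ s) :=
    softV_add hα Qstar₁ Qstar₂ (β₁ s - β₂ s) s fun a' => by
      have := hQs s a'; linarith
  have := hQ s a
  linarith
end

section
/- In a finite discounted MDP with α-optimal policy π*, for any policy π we have Q^{π}(s,a) ≤ Q^{π*}(s,a) for all (s,a), with equality at (s,a) if and only if π(·|s') = π*(·|s') for all states s' reachable with positive probability along π-trajectories starting from (s,a) at times t ≥ 1 (discounted by positive γ^t), assuming γ ∈ (0,1). -/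
open Finset

variable {S A : Type*}

/-! Under `Q^{π*}`, the entropy-regularised value of any policy `π` at a state is
`softV − α · KL(π ‖ π*)`, with the KL term vanishing for `π*` itself. Subtracting the two soft
Bellman equations, the gap `Δ = Q^{π*} − Q^π` is therefore the Q-function of `π` for the
nonnegative cost `α · KL(π ‖ π*)` charged at every state visited after time 0. A discounted
minimum principle gives `Δ ≥ 0`; a zero of `Δ` forces the cost and `Δ` to vanish along every
π-reachable transition; conversely, if the cost vanishes on the reachable states, the maximum
`M` of `Δ` over the reachable state-action pairs satisfies `M ≤ γ M`, so `M ≤ 0`. -/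

open InformationTheory

section KullbackLeibler

variable [Fintype A] {p q : A → ℝ}

lemma KLdiv_self_s12 (p : A → ℝ) : KLdiv p p = 0 :=
  Finset.sum_eq_zero fun a _ => by
    rcases eq_or_ne (p a) 0 with h | h <;> simp [h]

lemma KLdiv_eq_sum_mul_klFun (hq : ∀ a, 0 < q a) (hpq : ∑ a, p a = ∑ a, q a) :
    KLdiv p q = ∑ a, q a * klFun (p a / q a) := by
  have hterm : ∀ a, q a * klFun (p a / q a) = p a * Real.log (p a / q a) + (q a - p a) := by
    intro a
    rw [klFun_apply]
    field_simp [(hq a).ne']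
    ring
  simp only [hterm, Finset.sum_add_distrib, Finset.sum_sub_distrib, hpq, sub_self, add_zero,
    KLdiv]

lemma KLdiv_nonneg (hp : ∀ a, 0 ≤ p a) (hq : ∀ a, 0 < q a) (hpq : ∑ a, p a = ∑ a, q a) :
    0 ≤ KLdiv p q := by
  rw [KLdiv_eq_sum_mul_klFun hq hpq]
  exact Finset.sum_nonneg fun a _ =>
    mul_nonneg (hq a).le (klFun_nonneg (div_nonneg (hp a) (hq a).le))

lemma KLdiv_eq_zero_iff (hp : ∀ a, 0 ≤ p a) (hq : ∀ a, 0 < q a)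
    (hpq : ∑ a, p a = ∑ a, q a) : KLdiv p q = 0 ↔ p = q := by
  refine ⟨fun h => funext fun a => ?_, fun h => h ▸ KLdiv_self_s12 p⟩
  rw [KLdiv_eq_sum_mul_klFun hq hpq, Finset.sum_eq_zero_iff_of_nonneg fun a _ =>
    mul_nonneg (hq a).le (klFun_nonneg (div_nonneg (hp a) (hq a).le))] at h
  have := (mul_eq_zero.1 (h a (Finset.mem_univ a))).resolve_left (hq a).ne'
  rwa [klFun_eq_zero_iff (div_nonneg (hp a) (hq a).le), div_eq_one_iff_eq (hq a).ne'] at this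

end KullbackLeibler

lemma sum_mul_add_entH_eq_softV_sub_KLdiv [Fintype A] {α : ℝ} (hα : α ≠ 0)
    {πstar Q : S → A → ℝ} (hopt : IsAlphaOptimal α πstar Q) {p : A → ℝ} (hp : ∑ a, p a = 1)
    (s : S) :
    ∑ a, p a * Q s a + α * entH p = softV α Q s - α * KLdiv p (πstar s) := by
  have hterm : ∀ a, α * (p a * Real.log (p a / πstar s a))
      = α * (p a * Real.log (p a)) - p a * Q s a + p a * softV α Q s := by
    intro a
    rcases eq_or_ne (p a) 0 with h | h
    · simp [h]
    · rw [hopt s a, Real.log_div h (Real.exp_pos _).ne', Real.log_exp]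
      field_simp
      ring
  simp only [KLdiv, entH, Finset.mul_sum, hterm, Finset.sum_add_distrib, Finset.sum_sub_distrib,
    ← Finset.sum_mul, hp]
  rw [mul_neg, Finset.mul_sum]
  ring

/-- The cost `c x` is incurred on entering `x`, so the sum starts at time 1, like `seqKL`. -/
def IsDiscountedCostQ [Fintype S] [Fintype A] (P : S → A → S → ℝ) (π : S → A → ℝ) (γ : ℝ)
    (c : S → ℝ) (Δ : S → A → ℝ) : Prop :=
  ∀ u b, Δ u b = γ * ∑ x, P u b x * (c x + ∑ b', π x b' * Δ x b')

lemma isDiscountedCostQ_sub [Fintype S] [Fintype A] {P : S → A → S → ℝ} {r : S → A → ℝ}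
    {γ α : ℝ} (hα : α ≠ 0) {πstar π Qstar Qπ : S → A → ℝ}
    (hπstar : ∀ s, ∑ a, πstar s a = 1) (hπ : ∀ s, ∑ a, π s a = 1)
    (hQstar : IsSoftQ P r γ α πstar Qstar) (hopt : IsAlphaOptimal α πstar Qstar)
    (hQπ : IsSoftQ P r γ α π Qπ) :
    IsDiscountedCostQ P π γ (fun x => α * KLdiv (π x) (πstar x))
      (fun u b => Qstar u b - Qπ u b) := by
  have hterm : ∀ x, (∑ a, πstar x a * Qstar x a + α * entH (πstar x))
      - (∑ a, π x a * Qπ x a + α * entH (π x))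
      = α * KLdiv (π x) (πstar x) + ∑ a, π x a * (Qstar x a - Qπ x a) := by
    intro x
    have hstar := sum_mul_add_entH_eq_softV_sub_KLdiv hα hopt (hπstar x) x
    have hpol := sum_mul_add_entH_eq_softV_sub_KLdiv hα hopt (hπ x) x
    rw [KLdiv_self_s12] at hstar
    simp only [mul_sub, Finset.sum_sub_distrib]
    linarith
  intro u b
  dsimp only
  rw [hQstar u b, hQπ u b, add_sub_add_left_eq_sub, ← mul_sub, ← Finset.sum_sub_distrib]
  simp only [← mul_sub, hterm]

lemma mul_pos_iff_of_nonneg {R : Type*} [Semiring R] [PartialOrder R] [IsStrictOrderedRing R]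
    {a b : R} (ha : 0 ≤ a) (hb : 0 ≤ b) : 0 < a * b ↔ 0 < a ∧ 0 < b :=
  ⟨fun h => ⟨ha.lt_of_ne (by rintro rfl; simp at h), hb.lt_of_ne (by rintro rfl; simp at h)⟩,
    fun h => mul_pos h.1 h.2⟩

section StateDist

variable [Fintype S] [Fintype A] {P : S → A → S → ℝ} {π : S → A → ℝ}

lemma stateDist_nonneg (hP : ∀ s a x, 0 ≤ P s a x) (hπ : ∀ s a, 0 ≤ π s a) :
    ∀ n s a x, 0 ≤ stateDist P π n s a x
  | 0, s, a, x => hP s a x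
  | n + 1, s, a, x => Finset.sum_nonneg fun u _ => mul_nonneg (stateDist_nonneg hP hπ n s a u)
      (Finset.sum_nonneg fun b _ => mul_nonneg (hπ u b) (hP u b x))

lemma stateDist_succ_pos_iff (hP : ∀ s a x, 0 ≤ P s a x) (hπ : ∀ s a, 0 ≤ π s a)
    {n : ℕ} {s : S} {a : A} {x : S} :
    0 < stateDist P π (n + 1) s a x ↔
      ∃ u b, 0 < stateDist P π n s a u ∧ 0 < π u b ∧ 0 < P u b x := by
  have hsum (u : S) : 0 ≤ ∑ b, π u b * P u b x :=
    Finset.sum_nonneg fun b _ => mul_nonneg (hπ u b) (hP u b x)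
  simp only [stateDist, Finset.mem_univ, true_and,
    Finset.sum_pos_iff_of_nonneg fun u _ => mul_nonneg (stateDist_nonneg hP hπ n s a u) (hsum u),
    mul_pos_iff_of_nonneg (stateDist_nonneg hP hπ n s a _) (hsum _),
    Finset.sum_pos_iff_of_nonneg fun b _ => mul_nonneg (hπ _ b) (hP _ b x),
    mul_pos_iff_of_nonneg (hπ _ _) (hP _ _ x), exists_and_left]

end StateDist

namespace IsDiscountedCostQ

variable [Fintype S] [Fintype A] {P : S → A → S → ℝ} {π : S → A → ℝ} {γ : ℝ} {c : S → ℝ}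
  {Δ : S → A → ℝ}

lemma nonneg (hΔ : IsDiscountedCostQ P π γ c Δ) (hP : IsKernel P) (hπ : IsPolicy π)
    (hγ0 : 0 ≤ γ) (hγ1 : γ < 1) (hc : ∀ x, 0 ≤ c x) (u : S) (b : A) : 0 ≤ Δ u b := by
  obtain ⟨p, -, hmin⟩ :=
    Finset.univ.exists_min_image (fun p : S × A => Δ p.1 p.2) ⟨(u, b), Finset.mem_univ _⟩
  set m := Δ p.1 p.2
  have hle (x : S) : m ≤ c x + ∑ b, π x b * Δ x b := calc
    m = ∑ b, π x b * m := by rw [← Finset.sum_mul, hπ.2 x, one_mul]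
    _ ≤ ∑ b, π x b * Δ x b := Finset.sum_le_sum fun b _ =>
        mul_le_mul_of_nonneg_left (hmin (x, b) (Finset.mem_univ _)) (hπ.1 x b)
    _ ≤ _ := le_add_of_nonneg_left (hc x)
  have hγm : γ * m ≤ m := calc
    γ * m = γ * ∑ x, P p.1 p.2 x * m := by rw [← Finset.sum_mul, hP.2, one_mul]
    _ ≤ γ * ∑ x, P p.1 p.2 x * (c x + ∑ b, π x b * Δ x b) :=
        mul_le_mul_of_nonneg_left (Finset.sum_le_sum fun x _ =>
          mul_le_mul_of_nonneg_left (hle x) (hP.1 _ _ x)) hγ0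
    _ = m := (hΔ p.1 p.2).symm
  have hm : 0 ≤ m := by nlinarith
  exact hm.trans (hmin (u, b) (Finset.mem_univ _))

lemma eq_zero_of_kernel_pos (hΔ : IsDiscountedCostQ P π γ c Δ) (hP : ∀ s a x, 0 ≤ P s a x)
    (hπ : ∀ s a, 0 ≤ π s a) (hγ : γ ≠ 0) (hc : ∀ x, 0 ≤ c x) (hΔ0 : ∀ u b, 0 ≤ Δ u b)
    {u : S} {b : A} {x : S} (h : Δ u b = 0) (hx : 0 < P u b x) :
    c x = 0 ∧ ∀ b', 0 < π x b' → Δ x b' = 0 := by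
  have hnn (y : S) (b' : A) : 0 ≤ π y b' * Δ y b' := mul_nonneg (hπ y b') (hΔ0 y b')
  rw [hΔ u b, mul_eq_zero, or_iff_right hγ, Finset.sum_eq_zero_iff_of_nonneg fun y _ =>
    mul_nonneg (hP u b y) (add_nonneg (hc y) (Finset.sum_nonneg fun b' _ => hnn y b'))] at h
  obtain ⟨hcx, hsum⟩ :=
    (add_eq_zero_iff_of_nonneg (hc x) (Finset.sum_nonneg fun b' _ => hnn x b')).1
    ((mul_eq_zero.1 (h x (Finset.mem_univ x))).resolve_left hx.ne')
  rw [Finset.sum_eq_zero_iff_of_nonneg fun b' _ => hnn x b'] at hsum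
  exact ⟨hcx, fun b' hb' => (mul_eq_zero.1 (hsum b' (Finset.mem_univ b'))).resolve_left hb'.ne'⟩

lemma eq_zero_of_stateDist_pos (hΔ : IsDiscountedCostQ P π γ c Δ) (hP : ∀ s a x, 0 ≤ P s a x)
    (hπ : ∀ s a, 0 ≤ π s a) (hγ : γ ≠ 0) (hc : ∀ x, 0 ≤ c x) (hΔ0 : ∀ u b, 0 ≤ Δ u b)
    {s : S} {a : A} (h : Δ s a = 0) :
    ∀ n x, 0 < stateDist P π n s a x → c x = 0 ∧ ∀ b, 0 < π x b → Δ x b = 0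
  | 0, _, hx => hΔ.eq_zero_of_kernel_pos hP hπ hγ hc hΔ0 h hx
  | n + 1, _, hx => by
    obtain ⟨u, b, hu, hb, hx⟩ := (stateDist_succ_pos_iff hP hπ).1 hx
    exact hΔ.eq_zero_of_kernel_pos hP hπ hγ hc hΔ0
      ((hΔ.eq_zero_of_stateDist_pos hP hπ hγ hc hΔ0 h n u hu).2 b hb) hx

lemma nonpos_of_closed (hΔ : IsDiscountedCostQ P π γ c Δ) (hP : IsKernel P) (hπ : IsPolicy π)
    (hγ0 : 0 ≤ γ) (hγ1 : γ < 1) (R : Finset (S × A))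
    (hR : ∀ p ∈ R, ∀ x, 0 < P p.1 p.2 x → c x = 0 ∧ ∀ b, 0 < π x b → (x, b) ∈ R) :
    ∀ p ∈ R, Δ p.1 p.2 ≤ 0 := by
  intro p hp
  obtain ⟨q, hq, hmax⟩ := R.exists_max_image (fun p => Δ p.1 p.2) ⟨p, hp⟩
  set M := Δ q.1 q.2
  have hle (x : S) : P q.1 q.2 x * (c x + ∑ b, π x b * Δ x b) ≤ P q.1 q.2 x * M := by
    rcases (hP.1 q.1 q.2 x).eq_or_lt with hx | hx
    · simp [← hx]
    obtain ⟨hcx, hxR⟩ := hR q hq x hx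
    refine mul_le_mul_of_nonneg_left ?_ hx.le
    calc c x + ∑ b, π x b * Δ x b ≤ ∑ b, π x b * M := by
          rw [hcx, zero_add]
          refine Finset.sum_le_sum fun b _ => ?_
          rcases (hπ.1 x b).eq_or_lt with hb | hb
          · simp [← hb]
          · exact mul_le_mul_of_nonneg_left (hmax _ (hxR b hb)) hb.le
      _ = M := by rw [← Finset.sum_mul, hπ.2 x, one_mul]
  have hM : M ≤ γ * M := calc
    M = γ * ∑ x, P q.1 q.2 x * (c x + ∑ b, π x b * Δ x b) := hΔ q.1 q.2
    _ ≤ γ * ∑ x, P q.1 q.2 x * M :=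
        mul_le_mul_of_nonneg_left (Finset.sum_le_sum fun x _ => hle x) hγ0
    _ = γ * M := by rw [← Finset.sum_mul, hP.2, one_mul]
  have hM0 : M ≤ 0 := by nlinarith
  exact (hmax p hp).trans hM0

lemma nonpos_of_cost_eq_zero_of_reachable (hΔ : IsDiscountedCostQ P π γ c Δ) (hP : IsKernel P)
    (hπ : IsPolicy π) (hγ0 : 0 ≤ γ) (hγ1 : γ < 1) {s : S} {a : A}
    (hc : ∀ x, (∃ n, 0 < stateDist P π n s a x) → c x = 0) : Δ s a ≤ 0 := by
  classical
  let R := Finset.univ.filter fun p : S × A =>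
    p = (s, a) ∨ (∃ n, 0 < stateDist P π n s a p.1) ∧ 0 < π p.1 p.2
  have hreach : ∀ p ∈ R, ∀ x, 0 < P p.1 p.2 x → ∃ n, 0 < stateDist P π n s a x := by
    rintro ⟨u, b⟩ hp x hx
    rcases (Finset.mem_filter.1 hp).2 with h | ⟨⟨n, hn⟩, hb⟩
    · obtain ⟨rfl, rfl⟩ := Prod.mk.inj h
      exact ⟨0, hx⟩
    · exact ⟨n + 1, (stateDist_succ_pos_iff hP.1 hπ.1).2 ⟨u, b, hn, hb, hx⟩⟩
  refine hΔ.nonpos_of_closed hP hπ hγ0 hγ1 R (fun p hp x hx =>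
    ⟨hc x (hreach p hp x hx), fun b hb => ?_⟩) (s, a) (by simp [R])
  exact Finset.mem_filter.2 ⟨Finset.mem_univ _, Or.inr ⟨hreach p hp x hx, hb⟩⟩

end IsDiscountedCostQ

theorem stmt12_general [Fintype S] [Fintype A]
    (P : S → A → S → ℝ) (hP : IsKernel P)
    (r : S → A → ℝ) (γ α : ℝ) (hγ0 : 0 < γ) (hγ1 : γ < 1) (hα : 0 < α)
    (πstar π : S → A → ℝ) (hπstar : IsPolicy πstar) (hπ : IsPolicy π)
    (hpos : ∀ s a, 0 < πstar s a)
    (Qstar : S → A → ℝ) (hQstar : IsSoftQ P r γ α πstar Qstar)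
    (hopt : IsAlphaOptimal α πstar Qstar)
    (Qπ : S → A → ℝ) (hQπ : IsSoftQ P r γ α π Qπ) :
    ∀ s a, Qπ s a ≤ Qstar s a ∧
      (Qπ s a = Qstar s a ↔
        ∀ s' : S, (∃ n : ℕ, 0 < stateDist P π n s a s') → π s' = πstar s') := by
  intro s a
  have hsum (x : S) : ∑ b, π x b = ∑ b, πstar x b := by rw [hπ.2, hπstar.2]
  have hgap := isDiscountedCostQ_sub hα.ne' hπstar.2 hπ.2 hQstar hopt hQπ
  have hc (x : S) : 0 ≤ α * KLdiv (π x) (πstar x) :=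
    mul_nonneg hα.le (KLdiv_nonneg (hπ.1 x) (hpos x) (hsum x))
  have hgap0 := hgap.nonneg hP hπ hγ0.le hγ1 hc
  refine ⟨sub_nonneg.1 (hgap0 s a), fun hQ x ⟨n, hx⟩ => ?_, fun hreach => ?_⟩
  · have hKL := (hgap.eq_zero_of_stateDist_pos hP.1 hπ.1 hγ0.ne' hc hgap0
      (sub_eq_zero.2 hQ.symm) n x hx).1
    exact (KLdiv_eq_zero_iff (hπ.1 x) (hpos x) (hsum x)).1
      ((mul_eq_zero.1 hKL).resolve_left hα.ne')
  · refine le_antisymm (sub_nonneg.1 (hgap0 s a)) (sub_nonpos.1 ?_)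
    exact hgap.nonpos_of_cost_eq_zero_of_reachable hP hπ hγ0.le hγ1 fun x hx => by
      simp only [hreach x hx, KLdiv_self_s12, mul_zero]

theorem stmt12 [Fintype S] [Fintype A] [Nonempty A]
    (P : S → A → S → ℝ) (hP : IsKernel P)
    (r : S → A → ℝ) (γ α : ℝ) (hγ0 : 0 < γ) (hγ1 : γ < 1) (hα : 0 < α)
    (πstar π : S → A → ℝ) (hπstar : IsPolicy πstar) (hπ : IsPolicy π)
    (hpos : ∀ s a, 0 < πstar s a)
    (Qstar : S → A → ℝ) (hQstar : IsSoftQ P r γ α πstar Qstar)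
    (hopt : IsAlphaOptimal α πstar Qstar)
    (Qπ : S → A → ℝ) (hQπ : IsSoftQ P r γ α π Qπ) :
    ∀ s a, Qπ s a ≤ Qstar s a ∧
      (Qπ s a = Qstar s a ↔
        ∀ s' : S, (∃ n : ℕ, 0 < stateDist P π n s a s') → π s' = πstar s') :=
  stmt12_general P hP r γ α hγ0 hγ1 hα πstar π hπstar hπ hpos Qstar hQstar hopt Qπ hQπ
end
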